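/- Let k ≥ 2 and let B be a k-neoliberal relational structure. Then: for every ℓ < k, every ℓ-ary relation first-order definable from B is a Boolean combination of equalities and non-equalities between coordinates; every k-ary relation first-order definable from B is a union of relations of B; and every relation of arity ℓ > k first-order definable from B is a Boolean combination of the (k-ary) relations of B applied to k-subtuples. -/

import Mathlib

open Function Set

namespace CSPPaper

/-- A relational signature: a type of relation symbols together with arities. -/
structure Sig where
  ι : Type
  arity : ι → ℕ

/-- A relational structure with signature `σ` on domain `A`. -/
structure StructOn (σ : Sig) (A : Type) where
  rel : ∀ i : σ.ι, Set (Fin (σ.arity i) → A)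

variable {A : Type} {σ σ' : Sig}

/-! ### Homomorphisms and embeddings between relational structures -/

def IsHom {B : Type} (X : StructOn σ A) (Y : StructOn σ B) (h : A → B) : Prop :=
  ∀ i, ∀ t ∈ X.rel i, (h ∘ t) ∈ Y.rel i

def IsEmbeddingHom {B : Type} (X : StructOn σ A) (Y : StructOn σ B) (h : A → B) : Prop :=
  Function.Injective h ∧ ∀ i, ∀ t : Fin (σ.arity i) → A, t ∈ X.rel i ↔ (h ∘ t) ∈ Y.rel i

def Embeds {B : Type} (X : StructOn σ A) (Y : StructOn σ B) : Prop :=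
  ∃ h, IsEmbeddingHom X Y h

def Isomorphic {B : Type} (X : StructOn σ A) (Y : StructOn σ B) : Prop :=
  ∃ h, Function.Bijective h ∧ IsEmbeddingHom X Y h

/-- A finite `σ`-structure, with domain `Fin m` for some `m`. -/
def FinStructOn (σ : Sig) : Type := Σ m : ℕ, StructOn σ (Fin m)

/-- `Y` is a homomorphic image of `X`. -/
def IsHomImage (X Y : FinStructOn σ) : Prop :=
  ∃ h : Fin X.1 → Fin Y.1, Function.Surjective h ∧
    ∀ i, Y.2.rel i = (fun t => h ∘ t) '' X.2.rel i

/-- The substructure of `X` induced on a subset `S` of its domain. -/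
def inducedSub {B : Type} (X : StructOn σ B) (S : Set B) : StructOn σ ↥S :=
  ⟨fun i => {t | (fun j => (t j : B)) ∈ X.rel i}⟩

/-! ### Finite boundedness and finite duality -/

/-- `F` is a finite list of bounds witnessing finite boundedness of `S`. -/
def IsBoundWitness (S : StructOn σ A) (F : List (FinStructOn σ)) : Prop :=
  ∀ C : FinStructOn σ, (∀ X ∈ F, ¬ Embeds X.2 C.2) → Embeds C.2 S

def FinitelyBounded (S : StructOn σ A) : Prop := ∃ F, IsBoundWitness S F

/-- `b = b_S`: the least possible size of the biggest structure in a witnessing family. -/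
def IsBoundSize (S : StructOn σ A) (b : ℕ) : Prop :=
  IsLeast {b' : ℕ | ∃ F, IsBoundWitness S F ∧ ∀ X ∈ F, X.1 ≤ b'} b

/-- `S` has finite duality: it is finitely bounded with a witnessing family closed under
homomorphic images. -/
def FiniteDuality (S : StructOn σ A) : Prop :=
  ∃ F, IsBoundWitness S F ∧
    ∀ X ∈ F, ∀ Y : FinStructOn σ, IsHomImage X Y → ∃ X' ∈ F, Isomorphic X'.2 Y.2

/-! ### Permutation groups -/

def orbitOf (G : Subgroup (Equiv.Perm A)) {n : ℕ} (t : Fin n → A) : Set (Fin n → A) :=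
  {s | ∃ g ∈ G, s = ⇑g ∘ t}

def IsGOrbit (G : Subgroup (Equiv.Perm A)) {n : ℕ} (O : Set (Fin n → A)) : Prop :=
  ∃ t, O = orbitOf G t

def Oligomorphic (G : Subgroup (Equiv.Perm A)) : Prop :=
  ∀ n : ℕ, {O : Set (Fin n → A) | IsGOrbit G O}.Finite

/-- `G` is `m`-transitive: one orbit on injective `m`-tuples. -/
def MTransitive (G : Subgroup (Equiv.Perm A)) (m : ℕ) : Prop :=
  ∀ s t : Fin m → A, Function.Injective s → Function.Injective t →
    ∃ g ∈ G, ⇑g ∘ s = t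

/-- `G` is `k`-homogeneous: for every `ℓ ≥ k`, the orbit of every `ℓ`-tuple is determined
by the orbits of its `k`-subtuples. -/
def KHomogeneous (G : Subgroup (Equiv.Perm A)) (k : ℕ) : Prop :=
  ∀ ℓ : ℕ, k ≤ ℓ → ∀ s t : Fin ℓ → A,
    (∀ p : Fin k → Fin ℓ, orbitOf G (s ∘ p) = orbitOf G (t ∘ p)) →
    orbitOf G s = orbitOf G t

/-- `G` has no `k`-algebraicity: the only fixed points of any pointwise stabilizer by
`k-1` elements are these elements themselves. -/
def NoKAlgebraicity (G : Subgroup (Equiv.Perm A)) (k : ℕ) : Prop :=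
  ∀ (a : Fin (k - 1) → A) (b : A),
    (∀ g ∈ G, (∀ i, g (a i) = a i) → g b = b) → ∃ i, b = a i

def Neoliberal (G : Subgroup (Equiv.Perm A)) (k : ℕ) : Prop :=
  Oligomorphic G ∧ MTransitive G (k - 1) ∧ KHomogeneous G k ∧ NoKAlgebraicity G k

/-- The signature of the canonical `k`-ary structure of `G`: one `k`-ary symbol for each
orbit of `k`-tuples. -/
def canonSig (G : Subgroup (Equiv.Perm A)) (k : ℕ) : Sig :=
  ⟨{O : Set (Fin k → A) // IsGOrbit G O}, fun _ => k⟩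

/-- The canonical `k`-ary structure of `G`. -/
def canonStruct (G : Subgroup (Equiv.Perm A)) (k : ℕ) : StructOn (canonSig G k) A :=
  ⟨fun O => O.1⟩

/-! ### First-order definability (via Mathlib's model theory) -/

def sigLang (σ : Sig) : FirstOrder.Language :=
  { Functions := fun _ => Empty, Relations := fun n => {i : σ.ι // σ.arity i = n} }

def structureOf (S : StructOn σ A) : (sigLang σ).Structure A where
  funMap := fun f _ => f.elim
  RelMap := fun r t => (fun j => t (Fin.cast r.2 j)) ∈ S.rel r.1

/-- `R` is first-order definable in the structure `S` (without parameters). -/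
def foDefinable (S : StructOn σ A) {α : Type} (R : Set (α → A)) : Prop :=
  letI := structureOf S
  Set.Definable (∅ : Set A) (sigLang σ) R

/-- `T` is a first-order expansion of `S`: all relations of `S` are among those of `T`,
and every relation of `T` is first-order definable in `S`. -/
def IsFOExpansion (S : StructOn σ A) (T : StructOn σ' A) : Prop :=
  (∃ (j : σ.ι → σ'.ι) (h : ∀ i, σ'.arity (j i) = σ.arity i),
    ∀ i, T.rel (j i) = {t | (t ∘ Fin.cast (h i).symm) ∈ S.rel i}) ∧
  ∀ i' : σ'.ι, foDefinable S (T.rel i')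

/-! ### Primitive positive definability -/

/-- `R ⊆ A^α` is definable by a primitive positive formula over the signature of `S`:
there are existentially quantified extra variables `Fin m`, a finite list of atomic
constraints (relation symbols applied to variables) and a finite list of equality atoms,
whose satisfying assignments project to `R`. -/
def ppDefinable (S : StructOn σ A) {α : Type} (R : Set (α → A)) : Prop :=
  ∃ (m : ℕ) (atoms : List ((i : σ.ι) × (Fin (σ.arity i) → α ⊕ Fin m)))
    (eqs : List ((α ⊕ Fin m) × (α ⊕ Fin m))),
    R = {t | ∃ e : Fin m → A,
      (∀ c ∈ atoms, (Sum.elim t e ∘ c.2) ∈ S.rel c.1) ∧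
      ∀ p ∈ eqs, Sum.elim t e p.1 = Sum.elim t e p.2}

/-! ### Polymorphisms and automorphisms -/

def Preserves {n m : ℕ} (f : (Fin n → A) → A) (R : Set (Fin m → A)) : Prop :=
  ∀ ts : Fin n → Fin m → A, (∀ j, ts j ∈ R) → (fun i => f fun j => ts j i) ∈ R

def IsPolymorphism (S : StructOn σ A) {n : ℕ} (f : (Fin n → A) → A) : Prop :=
  ∀ i, Preserves f (S.rel i)

def HasBinaryInjection (S : StructOn σ A) : Prop :=
  ∃ f : (Fin 2 → A) → A, IsPolymorphism S f ∧ Function.Injective f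

def IsAuto (S : StructOn σ A) (g : A → A) : Prop :=
  Function.Bijective g ∧ ∀ i, ∀ t : Fin (σ.arity i) → A, t ∈ S.rel i ↔ (g ∘ t) ∈ S.rel i

def autOrbit (S : StructOn σ A) {n : ℕ} (t : Fin n → A) : Set (Fin n → A) :=
  {s | ∃ g, IsAuto S g ∧ s = g ∘ t}

def IsAutOrbit (S : StructOn σ A) {n : ℕ} (O : Set (Fin n → A)) : Prop :=
  ∃ t, O = autOrbit S t

def OmegaCategorical (S : StructOn σ A) : Prop :=
  ∀ n : ℕ, {O : Set (Fin n → A) | IsAutOrbit S O}.Finite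

def Oligopotent (S : StructOn σ A) {n : ℕ} (f : (Fin n → A) → A) : Prop :=
  ∀ B' : Set A, B'.Finite → ∃ α : A → A, IsAuto S α ∧ ∀ b ∈ B', f (fun _ => b) = α b

/-- `f` is a quasi near-unanimity operation. -/
def IsQNU {n : ℕ} (f : (Fin n → A) → A) : Prop :=
  ∀ a b : A, ∀ j : Fin n, f (Function.update (fun _ => b) j a) = f (fun _ => a)

/-! ### CSP instances, minimality, relational width, strict width -/

structure Constraint (A V : Type) where
  scope : Set V
  val : Set (↥scope → A)

structure Instance (A V : Type) where
  cons : Set (Constraint A V)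
  fin : cons.Finite

def Instance.Solution {V : Type} (I : Instance A V) (f : V → A) : Prop :=
  ∀ C ∈ I.cons, (fun x : ↥C.scope => f x.1) ∈ C.val

def Instance.NonTrivial {V : Type} (I : Instance A V) : Prop :=
  ∀ C ∈ I.cons, C.val.Nonempty

/-- Projection of a constraint onto a tuple of variables from its scope. -/
def Constraint.projOn {V : Type} {m : ℕ} (C : Constraint A V) (u : Fin m → V)
    (h : ∀ j, u j ∈ C.scope) : Set (Fin m → A) :=
  {t | ∃ f ∈ C.val, ∀ j, t j = f ⟨u j, h j⟩}

/-- `(k,ℓ)`-minimality of an instance. -/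
def Instance.Minimal {V : Type} (I : Instance A V) (k ℓ : ℕ) : Prop :=
  (∀ m ≤ ℓ, ∀ t : Fin m → V, ∃ C ∈ I.cons, ∀ j, t j ∈ C.scope) ∧
  (∀ m ≤ k, ∀ u : Fin m → V, ∀ C1 ∈ I.cons, ∀ C2 ∈ I.cons,
    ∀ (h1 : ∀ j, u j ∈ C1.scope) (h2 : ∀ j, u j ∈ C2.scope),
      C1.projOn u h1 = C2.projOn u h2)

/-- `I` is an instance of `CSP(S)`: every constraint is, under some enumeration of its
scope, a relation of `S`. -/
def Instance.OfCSP {V : Type} (S : StructOn σ A) (I : Instance A V) : Prop :=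
  ∀ C ∈ I.cons, ∃ (i : σ.ι) (e : Fin (σ.arity i) ≃ ↥C.scope),
    C.val = {f | (fun j => f (e j)) ∈ S.rel i}

/-- `I` is an instance of `CSP_inj(S)`: an instance of `CSP(S)` all of whose constraints
project onto pairs of distinct variables into the injective pairs. -/
def Instance.OfInjCSP {V : Type} (S : StructOn σ A) (I : Instance A V) : Prop :=
  I.OfCSP S ∧ ∀ C ∈ I.cons, ∀ x y : ↥C.scope, x.1 ≠ y.1 → ∀ f ∈ C.val, f x ≠ f y

def Instance.EquivTo {V : Type} (I J : Instance A V) : Prop :=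
  ∀ f : V → A, I.Solution f ↔ J.Solution f

/-- `S` has relational width `(k,ℓ)`. -/
def RelWidth (S : StructOn σ A) (k ℓ : ℕ) : Prop :=
  ∀ (V : Type), Finite V → ∀ I : Instance A V, I.NonTrivial → I.Minimal k ℓ →
    (∃ J : Instance A V, J.OfCSP S ∧ I.EquivTo J) → ∃ f, I.Solution f

/-- `CSP_inj(S)` has relational width `(k,ℓ)`. -/
def RelWidthInj (S : StructOn σ A) (k ℓ : ℕ) : Prop :=
  ∀ (V : Type), Finite V → ∀ I : Instance A V, I.NonTrivial → I.Minimal k ℓ →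
    (∃ J : Instance A V, J.OfInjCSP S ∧ I.EquivTo J) → ∃ f, I.Solution f

/-- `S` has strict width `k`. -/
def StrictWidth (S : StructOn σ A) (k : ℕ) : Prop :=
  ∃ ℓ : ℕ, k < ℓ ∧ ∀ (V : Type), Finite V → ∀ I : Instance A V,
    I.OfCSP S → I.Minimal k ℓ → ∀ (U : Set V) (g : ↥U → A),
      (∀ C ∈ I.cons, ∃ h ∈ C.val, ∀ (x : V) (hU : x ∈ U) (hC : x ∈ C.scope),
        g ⟨x, hU⟩ = h ⟨x, hC⟩) →
      ∃ f, I.Solution f ∧ ∀ x : ↥U, f x.1 = g x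

def BoundedStrictWidth (S : StructOn σ A) : Prop :=
  ∃ k : ℕ, 1 ≤ k ∧ StrictWidth S k

/-! ### Implications -/

/-- Projection of a set of assignments onto a tuple of variables. -/
def proj {V : Type} {k : ℕ} (u : Fin k → V) (Φ : Set (V → A)) : Set (Fin k → A) :=
  (fun f => f ∘ u) '' Φ

/-- The data of a pp-formula with distinguished tuples of variables `u`, `v`:
a variable set `V`, the set `Φ` of satisfying assignments, and the tuples. -/
structure ImplData (A : Type) (k m : ℕ) where
  V : Type
  Φ : Set (V → A)
  u : Fin k → V
  v : Fin m → V

variable {k m n : ℕ}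

/-- `φ` is a `(C,u,D,v)`-pre-implication in `S` (items (2)-(5) of the definition of an
implication, together with the ambient conditions of that definition). -/
structure ImplData.IsPreImplication (φ : ImplData A k m) (S : StructOn σ A)
    (C : Set (Fin k → A)) (D : Set (Fin m → A)) : Prop where
  finV : Finite φ.V
  u_inj : Function.Injective φ.u
  v_inj : Function.Injective φ.v
  hk : k < Nat.card φ.V
  hm : m < Nat.card φ.V
  cover : Set.range φ.u ∪ Set.range φ.v = Set.univ
  C_ne : C.Nonempty
  D_ne : D.Nonempty
  C_pp : ppDefinable S C
  D_pp : ppDefinable S D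
  Φ_pp : ppDefinable S φ.Φ
  C_proper : C ⊂ proj φ.u φ.Φ
  D_proper : D ⊂ proj φ.v φ.Φ
  forward : ∀ f ∈ φ.Φ, f ∘ φ.u ∈ C → f ∘ φ.v ∈ D
  surj : ∀ a ∈ D, ∃ f ∈ φ.Φ, f ∘ φ.u ∈ C ∧ f ∘ φ.v = a

/-- `φ` is a `(C,u,D,v)`-implication in `S`. -/
def ImplData.IsImplication (φ : ImplData A k m) (S : StructOn σ A)
    (C : Set (Fin k → A)) (D : Set (Fin m → A)) : Prop :=
  φ.IsPreImplication S C D ∧ ∀ x y : φ.V, x ≠ y → ∃ f ∈ φ.Φ, f x ≠ f y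

/-- The implication `φ` is injective: all its satisfying assignments are injective. -/
def ImplData.Injective' (φ : ImplData A k m) : Prop :=
  ∀ f ∈ φ.Φ, Function.Injective f

/-- `f` is an `OP`-mapping of `φ`. -/
def ImplData.IsOPMap (φ : ImplData A k m) (O : Set (Fin k → A)) (P : Set (Fin m → A))
    (f : φ.V → A) : Prop :=
  f ∈ φ.Φ ∧ f ∘ φ.u ∈ O ∧ f ∘ φ.v ∈ P

/-- Restriction of `φ` to its injective satisfying assignments. -/
def ImplData.injRestrict (φ : ImplData A k m) : ImplData A k m :=
  ⟨φ.V, {f ∈ φ.Φ | Function.Injective f}, φ.u, φ.v⟩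

/-! ### Composition of implications -/

/-- The identification of the second distinguished tuple of `φ1` with the first
distinguished tuple of `φ2` (i.e. the renaming `v1 = u2` with no other shared
variables). -/
def compRel (φ1 : ImplData A k m) (φ2 : ImplData A m n) :
    (φ1.V ⊕ φ2.V) → (φ1.V ⊕ φ2.V) → Prop :=
  fun x y => ∃ i : Fin m, x = Sum.inl (φ1.v i) ∧ y = Sum.inr (φ2.u i)

/-- The composition `φ1 ∘ φ2`: the conjunction `φ1 ∧ φ2` (with `v1` renamed to `u2`),
with all variables not among the entries of `u1` and `v2` existentially quantified. -/
def ImplData.comp (φ1 : ImplData A k m) (φ2 : ImplData A m n) : ImplData A k n where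
  V := {q : Quot (compRel φ1 φ2) //
        q ∈ Set.range (fun x => Quot.mk (compRel φ1 φ2) (Sum.inl (φ1.u x))) ∪
            Set.range (fun x => Quot.mk (compRel φ1 φ2) (Sum.inr (φ2.v x)))}
  Φ := {f | ∃ h : Quot (compRel φ1 φ2) → A,
        (fun x => h (Quot.mk (compRel φ1 φ2) (Sum.inl x))) ∈ φ1.Φ ∧
        (fun x => h (Quot.mk (compRel φ1 φ2) (Sum.inr x))) ∈ φ2.Φ ∧
        ∀ q, f q = h q.1}
  u := fun i => ⟨Quot.mk (compRel φ1 φ2) (Sum.inl (φ1.u i)),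
        Set.mem_union_left _ (Set.mem_range_self i)⟩
  v := fun i => ⟨Quot.mk (compRel φ1 φ2) (Sum.inr (φ2.v i)),
        Set.mem_union_right _ (Set.mem_range_self i)⟩

/-- `ψ^{∘n}`: the `n`-fold composition of `ψ` with itself (`ψ` appears `n` times). -/
def ImplData.pow (ψ : ImplData A k k) : ℕ → ImplData A k k
  | 0 => ψ
  | 1 => ψ
  | (n + 2) => (ImplData.pow ψ (n + 1)).comp ψ

/-! ### The digraph of an implication -/

/-- The vertex set `Vert(E)`: orbits under `Aut(B)` contained in `E`. -/
def VertOf (Bstr : StructOn σ A) {k : ℕ} (E : Set (Fin k → A)) : Set (Set (Fin k → A)) :=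
  {O | IsAutOrbit Bstr O ∧ O ⊆ E}

/-- The arc relation of the digraph `B_φ` on `Vert(E)`. -/
def ArcOn (Bstr : StructOn σ A) (φ : ImplData A k k) (E : Set (Fin k → A))
    (O P : Set (Fin k → A)) : Prop :=
  O ∈ VertOf Bstr E ∧ P ∈ VertOf Bstr E ∧ ∃ f, φ.IsOPMap O P f

/-- `Scc` is a strongly connected component of `B_φ`. -/
def IsSCC (Bstr : StructOn σ A) (φ : ImplData A k k) (E : Set (Fin k → A))
    (Scc : Set (Set (Fin k → A))) : Prop :=
  Scc ⊆ VertOf Bstr E ∧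
  (∀ O ∈ Scc, ∀ P ∈ Scc, Relation.TransGen (ArcOn Bstr φ E) O P) ∧
  ∀ S' : Set (Set (Fin k → A)), Scc ⊆ S' → S' ⊆ VertOf Bstr E →
    (∀ O ∈ S', ∀ P ∈ S', Relation.TransGen (ArcOn Bstr φ E) O P) → S' = Scc

def IsSink (Bstr : StructOn σ A) (φ : ImplData A k k) (E : Set (Fin k → A))
    (Scc : Set (Set (Fin k → A))) : Prop :=
  ∀ O ∈ Scc, ∀ P, ArcOn Bstr φ E O P → P ∈ Scc

def IsSource (Bstr : StructOn σ A) (φ : ImplData A k k) (E : Set (Fin k → A))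
    (Scc : Set (Set (Fin k → A))) : Prop :=
  ∀ P ∈ Scc, ∀ O, ArcOn Bstr φ E O P → O ∈ Scc

/-- `φ` is a complete implication (with respect to the ground structure `Bstr`). -/
def IsComplete (Bstr : StructOn σ A) (φ : ImplData A k k) : Prop :=
  proj φ.u φ.Φ = proj φ.v φ.Φ ∧
  Nat.card (φ.comp φ).V = Nat.card φ.V ∧
  (∀ i : Fin k, φ.u i ∈ Set.range φ.v → φ.u i = φ.v i) ∧
  ∀ Scc, IsSCC Bstr φ (proj φ.u φ.Φ) Scc →
    ∀ O ∈ Scc, ∀ P ∈ Scc, ArcOn Bstr φ (proj φ.u φ.Φ) O P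

/-! ### The injective implication graph -/

/-- `(C1, C)` (given as `(P.1, P.2)`) is a vertex of the `k`-ary injective implication
graph of `S`. -/
def InjVertex (S : StructOn σ A) (k : ℕ) (P : Set (Fin k → A) × Set (Fin k → A)) : Prop :=
  P.2.Nonempty ∧ P.2 ⊂ P.1 ∧ ppDefinable S P.1 ∧ ppDefinable S P.2 ∧
    ∀ t ∈ P.2, Function.Injective t

/-- Arc of the `k`-ary injective implication graph of `S`. -/
def InjImplArc (S : StructOn σ A) (k : ℕ)
    (P Q : Set (Fin k → A) × Set (Fin k → A)) : Prop :=
  InjVertex S k P ∧ InjVertex S k Q ∧ P ≠ Q ∧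
  ∃ φ : ImplData A k k, φ.IsImplication S P.2 Q.2 ∧ φ.Injective' ∧
    proj φ.u φ.Φ = P.1 ∧ proj φ.v φ.Φ = Q.1

/-- `S` is implicationally simple on injective instances: the `k`-ary injective
implication graph of `S` is acyclic (contains no directed cycle). -/
def ImplSimpleInj (S : StructOn σ A) (k : ℕ) : Prop :=
  ¬ ∃ (nn : ℕ) (p : ℕ → Set (Fin k → A) × Set (Fin k → A)),
      0 < nn ∧ p 0 = p nn ∧ ∀ i < nn, InjImplArc S k (p i) (p (i + 1))

/-! ### Critical formulas -/

/-- `φ` is critical in `S` over `(C, D, φ.u, φ.v)`. -/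
structure IsCritical (S : StructOn σ A) (φ : ImplData A k k)
    (C D : Set (Fin k → A)) : Prop where
  disj : Disjoint C D
  C_inj : ∀ t ∈ C, Function.Injective t
  D_inj : ∀ t ∈ D, Function.Injective t
  D_pp : ppDefinable S D
  card_V : Nat.card φ.V = k + 1
  kpos : 0 < k
  u0 : φ.u ⟨0, kpos⟩ ∉ Set.range φ.u ∩ Set.range φ.v
  v0 : φ.v ⟨0, kpos⟩ ∉ Set.range φ.u ∩ Set.range φ.v
  impl : φ.IsImplication S C C
  D_proper_u : D ⊂ proj φ.u φ.Φ
  proju_inj : ∀ t ∈ proj φ.u φ.Φ, Function.Injective t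
  D_proper_v : D ⊂ proj φ.v φ.Φ
  projv_inj : ∀ t ∈ proj φ.v φ.Φ, Function.Injective t
  surjD : ∀ a ∈ D, ∃ f ∈ φ.Φ, f ∘ φ.u ∈ D ∧ f ∘ φ.v = a

/-! ### Boolean combinations -/

inductive BoolComb {β : Type} (basic : Set (Set β)) : Set β → Prop
  | of (s : Set β) (hs : s ∈ basic) : BoolComb basic s
  | univ : BoolComb basic Set.univ
  | compl (s : Set β) : BoolComb basic s → BoolComb basic sᶜ
  | inter (s t : Set β) : BoolComb basic s → BoolComb basic t → BoolComb basic (s ∩ t)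

end CSPPaper

/-!
A relation first-order definable from the canonical structure is invariant under `G`, so by
oligomorphicity it is a finite union of `G`-orbits; it remains to describe single orbits. At
arity `ℓ ≥ k`, `k`-homogeneity cuts an orbit out by the orbits of its `k`-subtuples. Below
arity `k`, no `k`-algebraicity forces `A` to have more than `k` elements (when `|A| ≥ 2`), so
`(k-1)`-transitivity passes to all smaller arities and an orbit is determined by its equality
pattern.
-/

namespace CSPPaper

open FirstOrder FirstOrder.Language MulAction

namespace BoolComb

variable {β : Type} {basic : Set (Set β)}

theorem empty : BoolComb basic ∅ := by
  simpa using compl _ (univ (basic := basic))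

theorem union {s t : Set β} (hs : BoolComb basic s) (ht : BoolComb basic t) :
    BoolComb basic (s ∪ t) := by
  simpa [compl_inter] using compl _ (inter _ _ (compl _ hs) (compl _ ht))

theorem sUnion {𝒮 : Set (Set β)} (h𝒮 : 𝒮.Finite) (h : ∀ s ∈ 𝒮, BoolComb basic s) :
    BoolComb basic (⋃₀ 𝒮) := by
  induction 𝒮, h𝒮 using Set.Finite.induction_on with
  | empty => simpa using empty
  | insert _ _ ih =>
    rw [sUnion_insert]
    exact union (h _ (mem_insert _ _)) (ih fun s hs => h s (mem_insert_of_mem _ hs))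

theorem iInter {ι : Type*} [Finite ι] {f : ι → Set β} (h : ∀ i, BoolComb basic (f i)) :
    BoolComb basic (⋂ i, f i) := by
  simpa using compl _ (sUnion (finite_range fun i => (f i)ᶜ) (forall_mem_range.2 fun i =>
    compl _ (h i)))

theorem of_subsingleton [Subsingleton β] (s : Set β) : BoolComb basic s := by
  obtain rfl | hs := s.eq_empty_or_nonempty
  · exact empty
  · exact hs.eq_univ ▸ univ

end BoolComb

variable {A : Type} {G : Subgroup (Equiv.Perm A)}

theorem orbitOf_eq_orbit {n : ℕ} (t : Fin n → A) : orbitOf G t = orbit G t := by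
  ext s
  constructor
  · rintro ⟨g, hg, rfl⟩
    exact ⟨⟨g, hg⟩, rfl⟩
  · rintro ⟨g, rfl⟩
    exact ⟨g, g.2, rfl⟩

theorem mem_orbitOf_self {n : ℕ} (t : Fin n → A) : t ∈ orbitOf G t :=
  orbitOf_eq_orbit (G := G) t ▸ mem_orbit_self t

theorem orbitOf_eq_iff {n : ℕ} {s t : Fin n → A} :
    orbitOf G s = orbitOf G t ↔ s ∈ orbitOf G t := by
  simp only [orbitOf_eq_orbit, orbit_eq_iff]

theorem comp_mem_orbitOf_iff {n : ℕ} {s t : Fin n → A} {g : Equiv.Perm A} (hg : g ∈ G) :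
    ⇑g ∘ s ∈ orbitOf G t ↔ s ∈ orbitOf G t := by
  rw [orbitOf_eq_orbit, ← orbit_eq_iff, ← orbit_eq_iff]
  change orbit G ((⟨g, hg⟩ : G) • s) = _ ↔ _
  rw [orbit_smul]

theorem comp_mem_of_foDefinable {k : ℕ} {α : Type} {R : Set (α → A)}
    (hR : foDefinable (canonStruct G k) R) {g : Equiv.Perm A} (hg : g ∈ G) {t : α → A}
    (ht : t ∈ R) : ⇑g ∘ t ∈ R := by
  let _ := structureOf (canonStruct G k)
  obtain ⟨φ, rfl⟩ := empty_definable_iff.1 hR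
  let e : A ≃[sigLang (canonSig G k)] A :=
    { toEquiv := g
      map_fun' := fun f _ => f.elim
      map_rel' := by
        rintro n ⟨⟨_, s, rfl⟩, _⟩ x
        exact comp_mem_orbitOf_iff hg }
  exact (StrongHomClass.realize_formula e φ (v := t)).2 ht

theorem sUnion_image_orbitOf {k n : ℕ} {R : Set (Fin n → A)}
    (hR : foDefinable (canonStruct G k) R) : ⋃₀ (orbitOf G '' R) = R := by
  refine subset_antisymm (sUnion_subset (forall_mem_image.2 ?_)) fun t ht =>
    ⟨_, mem_image_of_mem _ ht, mem_orbitOf_self t⟩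
  rintro t ht _ ⟨g, hg, rfl⟩
  exact comp_mem_of_foDefinable hR hg ht

theorem boolComb_of_foDefinable {k n : ℕ} {basic : Set (Set (Fin n → A))}
    (hG : Oligomorphic G) {R : Set (Fin n → A)} (hR : foDefinable (canonStruct G k) R)
    (h : ∀ t ∈ R, BoolComb basic (orbitOf G t)) : BoolComb basic R :=
  sUnion_image_orbitOf hR ▸ BoolComb.sUnion
    ((hG n).subset (image_subset_iff.2 fun t _ => ⟨t, rfl⟩)) (forall_mem_image.2 h)

theorem orbitOf_eq_iInter_of_kHomogeneous {k ℓ : ℕ} (hG : KHomogeneous G k) (hkℓ : k ≤ ℓ)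
    (t : Fin ℓ → A) :
    orbitOf G t = ⋂ p : Fin k → Fin ℓ, {s | s ∘ p ∈ orbitOf G (t ∘ p)} := by
  refine subset_antisymm ?_ fun s hs => ?_
  · rintro _ ⟨g, hg, rfl⟩
    exact mem_iInter.2 fun p => ⟨g, hg, rfl⟩
  · rw [← orbitOf_eq_iff]
    exact hG ℓ hkℓ s t fun p => orbitOf_eq_iff.2 (mem_iInter.1 hs p)

theorem MTransitive.isMultiplyPretransitive {m : ℕ} (h : MTransitive G m) :
    IsMultiplyPretransitive G A m := by
  rw [isMultiplyPretransitive_iff]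
  intro x y
  obtain ⟨g, hg, hxy⟩ := h x y x.injective y.injective
  exact ⟨⟨g, hg⟩, Function.Embedding.ext (congrFun hxy)⟩

/-- If `|A| ≤ k`, the pointwise stabilizer of a `(k-1)`-tuple listing `A \ {x}` also fixes `x`. -/
theorem NoKAlgebraicity.natCast_lt_encard [Nontrivial A] {k : ℕ} (h : NoKAlgebraicity G k) :
    (k : ℕ∞) < ENat.card A := by
  by_contra! hle
  have : Finite A := ENat.card_lt_top.1 (hle.trans_lt (ENat.natCast_lt_top k))
  rw [ENat.card_eq_coe_natCard, Nat.cast_le] at hle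
  obtain ⟨x⟩ := ‹Nontrivial A›.to_nonempty
  let S : Set A := {x}ᶜ
  have hS : Nat.card S ≤ k - 1 := by
    rw [Nat.card_coe_set_eq, ncard_compl, ncard_singleton]
    omega
  have : Nonempty S := (exists_ne x).elim fun y hy => ⟨⟨y, hy⟩⟩
  let e : S → Fin (k - 1) := Fin.castLE hS ∘ Finite.equivFin S
  let a : Fin (k - 1) → S := invFun e
  have hfix : ∀ g ∈ G, (∀ i, g (a i) = a i) → g x = x := by
    intro g _ hg
    have hfix_ne : ∀ y ≠ x, g y = y := fun y hy => by
      obtain ⟨i, hi⟩ := invFun_surjective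
        ((Fin.castLE_injective hS).comp (Finite.equivFin S).injective) ⟨y, hy⟩
      simpa [show a i = ⟨y, hy⟩ from hi] using hg i
    by_contra hgx
    exact hgx (g.injective (hfix_ne _ hgx))
  obtain ⟨i, hi⟩ := h _ x hfix
  exact (a i).2 hi.symm

theorem exists_smul_eq_of_eq_iff_eq {H : Type*} [Group H] [MulAction H A] {n : ℕ}
    [IsMultiplyPretransitive H A n] (hn : n ≤ ENat.card A) {ι : Type*} [Finite ι]
    (hι : Nat.card ι ≤ n) {s t : ι → A} (hst : ∀ i j, s i = s j ↔ t i = t j) :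
    ∃ g : H, g • s = t := by
  have := isMultiplyPretransitive_of_le' (G := H) ((Finite.card_range_le s).trans hι) hn
  let e := Finite.equivFin (range s)
  have ht : ∀ i, t (rangeSplitting s ⟨s i, i, rfl⟩) = t i := fun i =>
    (hst _ _).1 (apply_rangeSplitting s _)
  have ht_inj : Injective (t ∘ rangeSplitting s) := fun a b hab =>
    Subtype.ext (by simpa only [apply_rangeSplitting] using (hst _ _).2 hab)
  obtain ⟨g, hg⟩ := exists_smul_eq H (e.symm.toEmbedding.trans (Embedding.subtype _))
    ⟨t ∘ rangeSplitting s ∘ e.symm, ht_inj.comp e.symm.injective⟩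
  refine ⟨g, funext fun i => ?_⟩
  have : g • (e.symm (e ⟨s i, i, rfl⟩) : A) =
      t (rangeSplitting s (e.symm (e ⟨s i, i, rfl⟩))) :=
    DFunLike.congr_fun hg (e ⟨s i, i, rfl⟩)
  rwa [e.symm_apply_apply, ht] at this

theorem orbitOf_eq_setOf_eq_iff_eq [Nontrivial A] {k ℓ : ℕ} (htr : MTransitive G (k - 1))
    (hNA : NoKAlgebraicity G k) (hℓ : ℓ < k) (t : Fin ℓ → A) :
    orbitOf G t = {s : Fin ℓ → A | ∀ i j, s i = s j ↔ t i = t j} := by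
  refine subset_antisymm ?_ fun s hs => ?_
  · rintro _ ⟨g, -, rfl⟩ i j
    exact g.injective.eq_iff
  · have := htr.isMultiplyPretransitive
    obtain ⟨g, hg⟩ := exists_smul_eq_of_eq_iff_eq (H := G) (n := k - 1)
      ((Nat.cast_le.2 (k.sub_le 1)).trans hNA.natCast_lt_encard.le) (by rw [Nat.card_fin]; omega)
      fun i j => (hs i j).symm
    exact ⟨g, g.2, hg.symm⟩

theorem boolComb_setOf_eq_iff_eq {ℓ : ℕ} (t : Fin ℓ → A) :
    BoolComb {s : Set (Fin ℓ → A) | ∃ i j : Fin ℓ, s = {u | u i = u j}}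
      {s : Fin ℓ → A | ∀ i j, s i = s j ↔ t i = t j} := by
  classical
  have : {s : Fin ℓ → A | ∀ i j, s i = s j ↔ t i = t j} = ⋂ q : Fin ℓ × Fin ℓ,
      if t q.1 = t q.2 then {s | s q.1 = s q.2} else {s | s q.1 = s q.2}ᶜ := by
    ext s
    simp only [mem_ofPred_eq, mem_iInter, Prod.forall]
    refine forall₂_congr fun i j => ?_
    split_ifs with h <;> simp [h]
  rw [this]
  refine BoolComb.iInter fun q => ?_
  split_ifs
  · exact .of _ ⟨q.1, q.2, rfl⟩
  · exact .compl _ (.of _ ⟨q.1, q.2, rfl⟩)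

theorem boolComb_orbitOf_of_kHomogeneous {k ℓ : ℕ} (hG : KHomogeneous G k) (hkℓ : k ≤ ℓ)
    (t : Fin ℓ → A) :
    BoolComb {s : Set (Fin ℓ → A) | ∃ (i : (canonSig G k).ι) (p : Fin k → Fin ℓ),
      s = {u | (fun j => u (p j)) ∈ (canonStruct G k).rel i}} (orbitOf G t) :=
  orbitOf_eq_iInter_of_kHomogeneous hG hkℓ t ▸
    BoolComb.iInter fun p => .of _ ⟨⟨orbitOf G (t ∘ p), t ∘ p, rfl⟩, p, rfl⟩

end CSPPaper

open CSPPaper in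
theorem stmt19_general {A : Type} (k : ℕ) (G : Subgroup (Equiv.Perm A))
    (hG : Neoliberal G k) :
    (∀ ℓ : ℕ, ℓ < k → ∀ R : Set (Fin ℓ → A), foDefinable (canonStruct G k) R →
      BoolComb {s : Set (Fin ℓ → A) | ∃ i j : Fin ℓ, s = {t | t i = t j}} R) ∧
    (∀ R : Set (Fin k → A), foDefinable (canonStruct G k) R →
      ∃ 𝒪 : Set (Set (Fin k → A)),
        (∀ O ∈ 𝒪, ∃ i : (canonSig G k).ι, O = (canonStruct G k).rel i) ∧ R = ⋃₀ 𝒪) ∧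
    (∀ ℓ : ℕ, k < ℓ → ∀ R : Set (Fin ℓ → A), foDefinable (canonStruct G k) R →
      BoolComb {s : Set (Fin ℓ → A) | ∃ (i : (canonSig G k).ι) (p : Fin k → Fin ℓ),
        s = {t | (fun j => t (p j)) ∈ (canonStruct G k).rel i}} R) := by
  obtain ⟨hOlig, hTrans, hHom, hNA⟩ := hG
  refine ⟨fun ℓ hℓ R hR => ?_, fun R hR => ?_, fun ℓ hℓ R hR => ?_⟩
  · cases subsingleton_or_nontrivial A
    · exact BoolComb.of_subsingleton R
    · refine boolComb_of_foDefinable hOlig hR fun t _ => ?_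
      rw [orbitOf_eq_setOf_eq_iff_eq hTrans hNA hℓ t]
      exact boolComb_setOf_eq_iff_eq t
  · exact ⟨orbitOf G '' R, forall_mem_image.2 fun t _ => ⟨⟨orbitOf G t, t, rfl⟩, rfl⟩,
      (sUnion_image_orbitOf hR).symm⟩
  · exact boolComb_of_foDefinable hOlig hR fun t _ =>
      boolComb_orbitOf_of_kHomogeneous hHom hℓ.le t

open CSPPaper in
/-- description of the first-order definable relations of a `k`-neoliberal
structure: below arity `k` they are Boolean combinations of equalities, at arity `k`
unions of relations of `B`, and above arity `k` Boolean combinations of relations of `B`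
applied to `k`-subtuples. -/
theorem stmt19 {A : Type} (k : ℕ) (hk : 2 ≤ k) (G : Subgroup (Equiv.Perm A))
    (hG : Neoliberal G k) :
    (∀ ℓ : ℕ, ℓ < k → ∀ R : Set (Fin ℓ → A), foDefinable (canonStruct G k) R →
      BoolComb {s : Set (Fin ℓ → A) | ∃ i j : Fin ℓ, s = {t | t i = t j}} R) ∧
    (∀ R : Set (Fin k → A), foDefinable (canonStruct G k) R →
      ∃ 𝒪 : Set (Set (Fin k → A)),
        (∀ O ∈ 𝒪, ∃ i : (canonSig G k).ι, O = (canonStruct G k).rel i) ∧ R = ⋃₀ 𝒪) ∧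
    (∀ ℓ : ℕ, k < ℓ → ∀ R : Set (Fin ℓ → A), foDefinable (canonStruct G k) R →
      BoolComb {s : Set (Fin ℓ → A) | ∃ (i : (canonSig G k).ι) (p : Fin k → Fin ℓ),
        s = {t | (fun j => t (p j)) ∈ (canonStruct G k).rel i}} R) :=
  stmt19_general k G hG
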